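/- arXiv:1906.00757 — 3 statements merged into one kernel-verified Lean document; each statement's English description precedes it below -/
import Mathlib

section
/- Let E be a real Banach space, let a < b be real numbers, and let ψ, ψ' : ℝ → E be such that ψ is Bochner integrable on [a,b], ψ' is Bochner integrable on [a,b] with t ↦ ‖ψ'(t)‖² integrable on [a,b], and for every s ∈ [a,b] one has ψ(b) − ψ(s) = ∫_s^b ψ'(t) dt. Then ‖ψ(b) − (b−a)^{-1} ∫_a^b ψ(s) ds‖² ≤ (b−a) · ∫_a^b ‖ψ'(t)‖² dt. -/
/-!
By the fundamental theorem of calculus every value `ψ s`, `s ∈ [a, b]`, lies in the closed ball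
around `ψ b` of radius `C = ∫_a^b ‖ψ'‖`; this ball is closed and convex, so it also contains the
average of `ψ`. Jensen's inequality for `x ↦ x²` then gives `C² ≤ (b - a) ∫_a^b ‖ψ'‖²`.
-/

open MeasureTheory intervalIntegral Set

theorem sq_integral_le_measureReal_mul_integral_sq {α : Type*} [MeasurableSpace α]
    {μ : Measure α} [IsFiniteMeasure μ] {f : α → ℝ} (hf : Integrable f μ)
    (hf2 : Integrable (fun x => f x ^ 2) μ) :
    (∫ x, f x ∂μ) ^ 2 ≤ μ.real univ * ∫ x, f x ^ 2 ∂μ := by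
  rcases eq_zero_or_neZero μ with rfl | _
  · simp
  have jensen : (⨍ x, f x ∂μ) ^ 2 ≤ ⨍ x, f x ^ 2 ∂μ :=
    even_two.convexOn_pow.map_average_le (continuous_pow 2).continuousOn isClosed_univ
      (.of_forall fun _ => mem_univ _) hf hf2
  rw [average_eq, average_eq, smul_eq_mul, smul_eq_mul] at jensen
  field_simp at jensen
  exact jensen

theorem sq_intervalIntegral_le_mul_integral_sq {a b : ℝ} (hab : a ≤ b) {f : ℝ → ℝ}
    (hf : IntervalIntegrable f volume a b)
    (hf2 : IntervalIntegrable (fun t => f t ^ 2) volume a b) :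
    (∫ t in a..b, f t) ^ 2 ≤ (b - a) * ∫ t in a..b, f t ^ 2 := by
  have := sq_integral_le_measureReal_mul_integral_sq
    ((intervalIntegrable_iff_integrableOn_Ioc_of_le hab).1 hf)
    ((intervalIntegrable_iff_integrableOn_Ioc_of_le hab).1 hf2)
  rwa [measureReal_restrict_apply_univ, Real.volume_real_Ioc_of_le hab,
    ← integral_of_le hab, ← integral_of_le hab] at this

theorem Convex.intervalAverage_mem {E : Type*} [NormedAddCommGroup E] [NormedSpace ℝ E]
    [CompleteSpace E] {s : Set E} (hs : Convex ℝ s) (hsc : IsClosed s) {a b : ℝ} (hab : a ≠ b)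
    {f : ℝ → E} (hf : IntervalIntegrable f volume a b) (hfs : ∀ t ∈ uIoc a b, f t ∈ s) :
    (⨍ t in a..b, f t) ∈ s := by
  refine hs.set_average_mem hsc ?_ (by simp [Real.volume_uIoc])
    ((ae_restrict_iff' measurableSet_uIoc).2 (.of_forall hfs)) hf.def'
  simpa [Real.volume_uIoc, sub_eq_zero] using hab.symm

theorem norm_integral_le_integral_norm_of_mem_Icc {E : Type*} [NormedAddCommGroup E]
    [NormedSpace ℝ E] {a b s : ℝ} (hs : s ∈ Icc a b) {f : ℝ → E}
    (hf : IntervalIntegrable f volume a b) :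
    ‖∫ t in s..b, f t‖ ≤ ∫ t in a..b, ‖f t‖ :=
  (intervalIntegral.norm_integral_le_integral_norm hs.2).trans <|
    integral_mono_interval hs.1 hs.2 le_rfl (.of_forall fun _ => norm_nonneg _) hf.norm

/-- Squared deviation of the endpoint value from the time average is bounded by the
interval length times the squared `L²`-norm of the derivative: if
`ψ(b) − ψ(s) = ∫_s^b ψ'` for all `s ∈ [a,b]`, then
`‖ψ(b) − (b−a)⁻¹ ∫_a^b ψ‖² ≤ (b−a) ∫_a^b ‖ψ'‖²`. -/
theorem endpoint_sub_average_sq_norm_le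
    {E : Type*} [NormedAddCommGroup E] [NormedSpace ℝ E] [CompleteSpace E]
    (a b : ℝ) (hab : a < b) (ψ ψ' : ℝ → E)
    (hψ : IntervalIntegrable ψ volume a b)
    (hψ' : IntervalIntegrable ψ' volume a b)
    (hψ'sq : IntervalIntegrable (fun t => ‖ψ' t‖ ^ 2) volume a b)
    (hftc : ∀ s ∈ Set.Icc a b, ψ b - ψ s = ∫ t in s..b, ψ' t) :
    ‖ψ b - (b - a)⁻¹ • ∫ s in a..b, ψ s‖ ^ 2 ≤ (b - a) * ∫ t in a..b, ‖ψ' t‖ ^ 2 := by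
  set C := ∫ t in a..b, ‖ψ' t‖
  have hball : ∀ s ∈ uIoc a b, ψ s ∈ Metric.closedBall (ψ b) C := fun s hs => by
    have hs : s ∈ Icc a b := Ioc_subset_Icc_self (uIoc_of_le hab.le ▸ hs)
    rw [mem_closedBall_iff_norm', hftc s hs]
    exact norm_integral_le_integral_norm_of_mem_Icc hs hψ'
  have havg :=
    (convex_closedBall (ψ b) C).intervalAverage_mem Metric.isClosed_closedBall hab.ne hψ hball
  rw [mem_closedBall_iff_norm', interval_average_eq] at havg
  calc ‖ψ b - (b - a)⁻¹ • ∫ s in a..b, ψ s‖ ^ 2 ≤ C ^ 2 := by gcongr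
    _ ≤ (b - a) * ∫ t in a..b, ‖ψ' t‖ ^ 2 :=
      sq_intervalIntegral_le_mul_integral_sq hab.le hψ'.norm hψ'sq
end

section
/- Let E be a real Banach space, let t_F > 0, N ∈ ℕ with N ≥ 1, set τ := t_F/N and t^n := n·τ for 0 ≤ n ≤ N. Let ψ, ψ' : ℝ → E be such that ψ is Bochner integrable on [0, t_F], ψ' is Bochner integrable on [0, t_F] with t ↦ ‖ψ'(t)‖² integrable on [0, t_F], and for every 1 ≤ n ≤ N and every s ∈ [t^{n−1}, t^n] one has ψ(t^n) − ψ(s) = ∫_s^{t^n} ψ'(t) dt. For 1 ≤ n ≤ N set ψ̄^n := τ^{-1} ∫_{t^{n−1}}^{t^n} ψ(t) dt. Then ∑_{n=1}^N τ · ‖ψ(t^n) − ψ̄^n‖² ≤ τ² · ∫_0^{t_F} ‖ψ'(t)‖² dt. -/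
/-!
On the cell `(t^{n-1}, t^n]` every value `ψ(s)` lies within `r_n := ∫‖ψ'‖` (over the cell) of
`ψ(t^n)`, hence so does the average `ψ̄^n`, the ball being closed and convex. Jensen's inequality
for the square gives `r_n² ≤ τ ∫‖ψ'‖²` over the cell, and the cell integrals add up to the
integral over `(0, t_F)`.
-/

open MeasureTheory intervalIntegral Set
open scoped Interval

theorem sq_intervalAverage_le {f : ℝ → ℝ} {a b : ℝ} (hf : IntervalIntegrable f volume a b)
    (hf2 : IntervalIntegrable (fun x => f x ^ 2) volume a b) :
    (⨍ x in a..b, f x) ^ 2 ≤ ⨍ x in a..b, f x ^ 2 := by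
  rcases eq_or_ne a b with rfl | hab
  · simp
  · exact (Even.convexOn_pow even_two).map_set_average_le (continuous_pow 2).continuousOn
      isClosed_univ (by simpa [sub_eq_zero] using hab.symm) (by simp) (by simp)
      (intervalIntegrable_iff.mp hf) (intervalIntegrable_iff.mp hf2)

theorem sq_intervalIntegral_le {f : ℝ → ℝ} {a b : ℝ} (hab : a ≤ b)
    (hf : IntervalIntegrable f volume a b)
    (hf2 : IntervalIntegrable (fun x => f x ^ 2) volume a b) :
    (∫ x in a..b, f x) ^ 2 ≤ (b - a) * ∫ x in a..b, f x ^ 2 := by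
  rcases hab.eq_or_lt with rfl | hab
  · simp
  have hba : 0 < b - a := sub_pos.mpr hab
  have h := sq_intervalAverage_le hf hf2
  rw [interval_average_eq_div, interval_average_eq_div, div_pow,
    div_le_div_iff₀ (by positivity) hba] at h
  nlinarith

theorem uIcc_sub_one_mul_subset_uIcc_zero_mul {τ : ℝ} (hτ : 0 ≤ τ) {n N : ℕ}
    (hn : n ∈ Finset.Icc 1 N) :
    uIcc (((n : ℝ) - 1) * τ) (n * τ) ⊆ uIcc 0 (N * τ) := by
  obtain ⟨h1, hN⟩ := Finset.mem_Icc.mp hn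
  have h1' : (1 : ℝ) ≤ n := by exact_mod_cast h1
  have hN' : (n : ℝ) ≤ N := by exact_mod_cast hN
  rw [uIcc_of_le (by nlinarith), uIcc_of_le (by positivity)]
  exact Icc_subset_Icc (by nlinarith) (by nlinarith)

section

variable {E : Type*} [NormedAddCommGroup E] [NormedSpace ℝ E]

theorem sum_integral_uniform_partition {f : ℝ → E} {τ : ℝ} (hτ : 0 ≤ τ) {N : ℕ}
    (hf : IntervalIntegrable f volume 0 (N * τ)) :
    ∑ n ∈ Finset.Icc 1 N, ∫ x in ((n : ℝ) - 1) * τ..n * τ, f x = ∫ x in 0..N * τ, f x := by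
  rw [← Finset.Ico_add_one_right_eq_Icc, Finset.sum_Ico_eq_sum_range]
  have hadj := sum_integral_adjacent_intervals (μ := volume) (a := fun k : ℕ => (k : ℝ) * τ)
    fun k hk => hf.mono_set <| by
      simpa using uIcc_sub_one_mul_subset_uIcc_zero_mul hτ (n := k + 1) (by simp; omega)
  simp only [Nat.cast_zero, zero_mul] at hadj
  rw [← hadj]
  refine Finset.sum_congr rfl fun k _ => ?_
  push_cast
  ring_nf

variable [CompleteSpace E]

theorem norm_sub_intervalAverage_le {f : ℝ → E} {a b C : ℝ} (hab : a ≠ b)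
    (hf : IntervalIntegrable f volume a b) (x : E) (h : ∀ s ∈ Ι a b, ‖x - f s‖ ≤ C) :
    ‖x - ⨍ s in a..b, f s‖ ≤ C := by
  rw [← dist_eq_norm, dist_comm, ← Metric.mem_closedBall]
  refine (convex_closedBall x C).set_average_mem Metric.isClosed_closedBall
    (by simpa [sub_eq_zero] using hab.symm) (by simp) ?_ (intervalIntegrable_iff.mp hf)
  refine (ae_restrict_mem measurableSet_uIoc).mono fun s hs => ?_
  rw [Metric.mem_closedBall, dist_eq_norm, ← norm_neg, neg_sub]
  exact h s hs

theorem norm_sub_intervalAverage_sq_le {ψ ψ' : ℝ → E} {a b : ℝ} (hab : a < b)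
    (hψ : IntervalIntegrable ψ volume a b) (hψ' : IntervalIntegrable ψ' volume a b)
    (hψ'sq : IntervalIntegrable (fun t => ‖ψ' t‖ ^ 2) volume a b)
    (hftc : ∀ s ∈ Icc a b, ψ b - ψ s = ∫ t in s..b, ψ' t) :
    ‖ψ b - ⨍ s in a..b, ψ s‖ ^ 2 ≤ (b - a) * ∫ t in a..b, ‖ψ' t‖ ^ 2 := by
  have hincr : ∀ s ∈ Ι a b, ‖ψ b - ψ s‖ ≤ ∫ t in a..b, ‖ψ' t‖ := by
    intro s hs
    rw [uIoc_of_le hab.le] at hs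
    rw [hftc s (Ioc_subset_Icc_self hs)]
    calc ‖∫ t in s..b, ψ' t‖ ≤ ∫ t in s..b, ‖ψ' t‖ := norm_integral_le_integral_norm hs.2
      _ ≤ ∫ t in a..b, ‖ψ' t‖ := integral_mono_interval hs.1.le hs.2 le_rfl
          (Filter.Eventually.of_forall fun _ => norm_nonneg _) hψ'.norm
  calc ‖ψ b - ⨍ s in a..b, ψ s‖ ^ 2 ≤ (∫ t in a..b, ‖ψ' t‖) ^ 2 :=
        pow_le_pow_left₀ (norm_nonneg _) (norm_sub_intervalAverage_le hab.ne hψ _ hincr) 2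
    _ ≤ (b - a) * ∫ t in a..b, ‖ψ' t‖ ^ 2 := sq_intervalIntegral_le hab.le hψ'.norm hψ'sq

end

/-- Summed time-approximation estimate: on a uniform subdivision of `(0, t_F)` into `N`
subintervals of length `τ = t_F/N`, if on each subinterval `ψ(t^n) − ψ(s) = ∫_s^{t^n} ψ'`,
then `∑_{n=1}^N τ‖ψ(t^n) − ψ̄^n‖² ≤ τ² ∫_0^{t_F} ‖ψ'‖²`, where `ψ̄^n` is the time average
of `ψ` over `(t^{n−1}, t^n)`. -/
theorem sum_endpoint_sub_average_sq_norm_le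
    {E : Type*} [NormedAddCommGroup E] [NormedSpace ℝ E] [CompleteSpace E]
    (tF : ℝ) (htF : 0 < tF) (N : ℕ) (hN : 1 ≤ N) (ψ ψ' : ℝ → E)
    (hψ : IntervalIntegrable ψ volume 0 tF)
    (hψ' : IntervalIntegrable ψ' volume 0 tF)
    (hψ'sq : IntervalIntegrable (fun t => ‖ψ' t‖ ^ 2) volume 0 tF)
    (hftc : ∀ n : ℕ, 1 ≤ n → n ≤ N →
      ∀ s ∈ Set.Icc (((n : ℝ) - 1) * (tF / N)) ((n : ℝ) * (tF / N)),
        ψ ((n : ℝ) * (tF / N)) - ψ s = ∫ t in s..((n : ℝ) * (tF / N)), ψ' t) :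
    ∑ n ∈ Finset.Icc 1 N, (tF / N) *
        ‖ψ ((n : ℝ) * (tF / N)) -
          (tF / N)⁻¹ • ∫ t in (((n : ℝ) - 1) * (tF / N))..((n : ℝ) * (tF / N)), ψ t‖ ^ 2
      ≤ (tF / N) ^ 2 * ∫ t in (0 : ℝ)..tF, ‖ψ' t‖ ^ 2 := by
  set τ := tF / N with hτ_def
  have hτ : 0 < τ := div_pos htF (by exact_mod_cast hN)
  have htF_eq : tF = N * τ := by rw [hτ_def]; field_simp
  rw [htF_eq] at hψ hψ' hψ'sq ⊢
  calc _ ≤ ∑ n ∈ Finset.Icc 1 N, τ ^ 2 * ∫ t in ((n : ℝ) - 1) * τ..n * τ, ‖ψ' t‖ ^ 2 := by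
        refine Finset.sum_le_sum fun n hn => ?_
        obtain ⟨h1, hnN⟩ := Finset.mem_Icc.mp hn
        have hsub := uIcc_sub_one_mul_subset_uIcc_zero_mul hτ.le hn
        have hlen : (n : ℝ) * τ - ((n : ℝ) - 1) * τ = τ := by ring
        have h := norm_sub_intervalAverage_sq_le (by linarith) (hψ.mono_set hsub)
          (hψ'.mono_set hsub) (hψ'sq.mono_set hsub) (hftc n h1 hnN)
        rw [interval_average_eq, hlen] at h
        rw [sq τ, mul_assoc]
        exact mul_le_mul_of_nonneg_left h hτ.le
    _ = τ ^ 2 * ∫ t in (0 : ℝ)..N * τ, ‖ψ' t‖ ^ 2 := by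
        rw [← Finset.mul_sum, sum_integral_uniform_partition hτ.le hψ'sq]
end

section
/- For 2×2 symmetric real matrices define dev(τ) := tr(τ²) − (1/2)·(tr τ)², and define σ(τ) := (1 + exp(−dev(τ)))·tr(τ)·I + (4 − 2·exp(−dev(τ)))·τ, where I is the 2×2 identity matrix. Then σ maps symmetric matrices to symmetric matrices and there exist real constants C_gr > 0 and C_cv > 0 such that for all 2×2 symmetric real matrices τ, η: (i) |σ(τ)| ≤ C_gr·|τ|; (ii) σ(τ):τ ≥ C_cv²·|τ|²; and (iii) (σ(τ) − σ(η)):(τ − η) > 0 whenever τ ≠ η. -/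
open Matrix

/-- Frobenius inner product of two real matrices. -/
noncomputable def frobInner {d : ℕ} (A B : Matrix (Fin d) (Fin d) ℝ) : ℝ :=
  ∑ i, ∑ j, A i j * B i j

/-- Frobenius norm of a real matrix. -/
noncomputable def frobNorm {d : ℕ} (A : Matrix (Fin d) (Fin d) ℝ) : ℝ :=
  Real.sqrt (frobInner A A)

/-- Deviatoric part `dev(τ) := tr(τ²) − (1/2)(tr τ)²` of a 2×2 strain. -/
noncomputable def dev2 (τ : Matrix (Fin 2) (Fin 2) ℝ) : ℝ :=
  (τ * τ).trace - (1 / 2) * τ.trace ^ 2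

/-- The Hencky–Mises stress-strain law
`σ(τ) := (1 + e^{−dev τ})·tr(τ)·I + (4 − 2e^{−dev τ})·τ` used in the numerical test. -/
noncomputable def henckyMises2 (τ : Matrix (Fin 2) (Fin 2) ℝ) : Matrix (Fin 2) (Fin 2) ℝ :=
  ((1 + Real.exp (-dev2 τ)) * τ.trace) • (1 : Matrix (Fin 2) (Fin 2) ℝ) +
    (4 - 2 * Real.exp (-dev2 τ)) • τ

lemma frob_expand (A B : Matrix (Fin 2) (Fin 2) ℝ) :
    frobInner A B = A 0 0 * B 0 0 + A 0 1 * B 0 1 + A 1 0 * B 1 0 + A 1 1 * B 1 1 := by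
  simp [frobInner, Fin.sum_univ_two]; ring

lemma dev2_expand (τ : Matrix (Fin 2) (Fin 2) ℝ) :
    dev2 τ = τ 0 0 ^ 2 + τ 0 1 * τ 1 0 + τ 1 0 * τ 0 1 + τ 1 1 ^ 2
      - (1 / 2) * (τ 0 0 + τ 1 1) ^ 2 := by
  simp [dev2, Matrix.trace, Matrix.diag, Matrix.mul_apply, Fin.sum_univ_two]; ring

lemma hm_apply (τ : Matrix (Fin 2) (Fin 2) ℝ) (i j : Fin 2) :
    henckyMises2 τ i j = (1 + Real.exp (-dev2 τ)) * (τ 0 0 + τ 1 1) * (if i = j then 1 else 0)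
      + (4 - 2 * Real.exp (-dev2 τ)) * τ i j := by
  simp [henckyMises2, Matrix.trace, Matrix.diag, Fin.sum_univ_two, Matrix.one_apply]

/-- Scalar growth inequality. -/
lemma growth_scalar (a b c e : ℝ) (he0 : 0 < e) (he1 : e ≤ 1) :
    ((1 + e) * (a + c) + (4 - 2 * e) * a) ^ 2 + ((4 - 2 * e) * b) ^ 2
      + ((4 - 2 * e) * b) ^ 2 + ((1 + e) * (a + c) + (4 - 2 * e) * c) ^ 2
      ≤ 64 * (a ^ 2 + 2 * b ^ 2 + c ^ 2) := by
  nlinarith [mul_nonneg (mul_nonneg (by linarith : (0:ℝ) ≤ 1 - e) (by linarith : (0:ℝ) ≤ 3 - e))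
      (sq_nonneg (a + c)),
    mul_nonneg (mul_nonneg he0.le (by linarith : (0:ℝ) ≤ 4 - e)) (sq_nonneg a),
    mul_nonneg (mul_nonneg he0.le (by linarith : (0:ℝ) ≤ 4 - e)) (sq_nonneg b),
    mul_nonneg (mul_nonneg he0.le (by linarith : (0:ℝ) ≤ 4 - e)) (sq_nonneg c),
    sq_nonneg (a - c), sq_nonneg a, sq_nonneg b, sq_nonneg c]

/-- Scalar coercivity inequality. -/
lemma coercive_scalar (a b c e : ℝ) (he0 : 0 < e) (he1 : e ≤ 1) :
    a ^ 2 + 2 * b ^ 2 + c ^ 2 ≤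
      ((1 + e) * (a + c) + (4 - 2 * e) * a) * a + ((4 - 2 * e) * b) * b
      + ((4 - 2 * e) * b) * b + ((1 + e) * (a + c) + (4 - 2 * e) * c) * c := by
  nlinarith [mul_nonneg (by linarith : (0:ℝ) ≤ 1 + e) (sq_nonneg (a + c)),
    mul_nonneg (by linarith : (0:ℝ) ≤ 1 - e) (sq_nonneg a),
    mul_nonneg (by linarith : (0:ℝ) ≤ 1 - e) (sq_nonneg b),
    mul_nonneg (by linarith : (0:ℝ) ≤ 1 - e) (sq_nonneg c),
    sq_nonneg a, sq_nonneg b, sq_nonneg c]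

lemma exp_mono_aux (x y : ℝ) : (x - y) * (Real.exp (-x) - Real.exp (-y)) ≤ 0 := by
  rcases le_total x y with h | h
  · refine mul_nonpos_iff.mpr (Or.inr ⟨by linarith, ?_⟩)
    have := Real.exp_le_exp.mpr (neg_le_neg h)
    linarith
  · refine mul_nonpos_iff.mpr (Or.inl ⟨by linarith, ?_⟩)
    have := Real.exp_le_exp.mpr (neg_le_neg h)
    linarith

/-- Scalar strict monotonicity inequality. -/
lemma mono_scalar (a b c a' b' c' e1 e2 d1 d2 : ℝ) (he1 : e1 ≤ 1) (he2 : e2 ≤ 1)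
    (hd1 : d1 = a ^ 2 + 2 * b ^ 2 + c ^ 2 - (1 / 2) * (a + c) ^ 2)
    (hd2 : d2 = a' ^ 2 + 2 * b' ^ 2 + c' ^ 2 - (1 / 2) * (a' + c') ^ 2)
    (hmono : (d1 - d2) * (e1 - e2) ≤ 0)
    (hpos : 0 < (a - a') ^ 2 + (b - b') ^ 2 + (c - c') ^ 2) :
    0 < (((1 + e1) * (a + c) + (4 - 2 * e1) * a) - ((1 + e2) * (a' + c') + (4 - 2 * e2) * a'))
        * (a - a')
      + (((4 - 2 * e1) * b) - ((4 - 2 * e2) * b')) * (b - b')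
      + (((4 - 2 * e1) * b) - ((4 - 2 * e2) * b')) * (b - b')
      + (((1 + e1) * (a + c) + (4 - 2 * e1) * c) - ((1 + e2) * (a' + c') + (4 - 2 * e2) * c'))
        * (c - c') := by
  rw [hd1, hd2] at hmono
  nlinarith [hmono, hpos,
    mul_nonneg (sq_nonneg ((a - a') - (c - c'))) (by linarith : (0:ℝ) ≤ 2 - e1 - e2),
    mul_nonneg (sq_nonneg (b - b')) (by linarith : (0:ℝ) ≤ 2 - e1 - e2),
    sq_nonneg ((a - a') + (c - c')), sq_nonneg (a - a'), sq_nonneg (b - b'),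
    sq_nonneg (c - c')]

set_option maxHeartbeats 1000000 in
/-- The Hencky–Mises law of the numerical test maps symmetric matrices to symmetric
matrices and satisfies the growth, coercivity, and strict monotonicity assumptions. -/
theorem henckyMises2_properties :
    (∀ τ : Matrix (Fin 2) (Fin 2) ℝ, τ.IsSymm → (henckyMises2 τ).IsSymm) ∧
    ∃ Cgr > (0 : ℝ), ∃ Ccv > (0 : ℝ),
      ∀ τ η : Matrix (Fin 2) (Fin 2) ℝ, τ.IsSymm → η.IsSymm →
        frobNorm (henckyMises2 τ) ≤ Cgr * frobNorm τ ∧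
        Ccv ^ 2 * frobNorm τ ^ 2 ≤ frobInner (henckyMises2 τ) τ ∧
        (τ ≠ η → 0 < frobInner (henckyMises2 τ - henckyMises2 η) (τ - η)) := by
  constructor
  · intro τ hτ
    exact (Matrix.isSymm_one.smul _).add (hτ.smul _)
  refine ⟨8, by norm_num, 1, by norm_num, ?_⟩
  intro τ η hτ hη
  have hbτ : τ 1 0 = τ 0 1 := hτ.apply 0 1
  have hbη : η 1 0 = η 0 1 := hη.apply 0 1
  have hdτ : dev2 τ = τ 0 0 ^ 2 + 2 * τ 0 1 ^ 2 + τ 1 1 ^ 2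
      - (1 / 2) * (τ 0 0 + τ 1 1) ^ 2 := by
    rw [dev2_expand, hbτ]; ring
  have hdη : dev2 η = η 0 0 ^ 2 + 2 * η 0 1 ^ 2 + η 1 1 ^ 2
      - (1 / 2) * (η 0 0 + η 1 1) ^ 2 := by
    rw [dev2_expand, hbη]; ring
  have he1p : 0 < Real.exp (-dev2 τ) := Real.exp_pos _
  have he2p : 0 < Real.exp (-dev2 η) := Real.exp_pos _
  have hdτ0 : 0 ≤ dev2 τ := by
    rw [hdτ]; nlinarith [sq_nonneg (τ 0 0 - τ 1 1), sq_nonneg (τ 0 1)]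
  have hdη0 : 0 ≤ dev2 η := by
    rw [hdη]; nlinarith [sq_nonneg (η 0 0 - η 1 1), sq_nonneg (η 0 1)]
  have he1le : Real.exp (-dev2 τ) ≤ 1 := by
    rw [show (1 : ℝ) = Real.exp 0 by simp]
    exact Real.exp_le_exp.mpr (by linarith)
  have he2le : Real.exp (-dev2 η) ≤ 1 := by
    rw [show (1 : ℝ) = Real.exp 0 by simp]
    exact Real.exp_le_exp.mpr (by linarith)
  have hS : frobInner τ τ = τ 0 0 ^ 2 + 2 * τ 0 1 ^ 2 + τ 1 1 ^ 2 := by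
    rw [frob_expand, hbτ]; ring
  have hS0 : 0 ≤ frobInner τ τ := by rw [hS]; positivity
  -- entries of the stresses
  have s00 : henckyMises2 τ 0 0 = (1 + Real.exp (-dev2 τ)) * (τ 0 0 + τ 1 1)
      + (4 - 2 * Real.exp (-dev2 τ)) * τ 0 0 := by
    rw [hm_apply]; norm_num
  have s01 : henckyMises2 τ 0 1 = (4 - 2 * Real.exp (-dev2 τ)) * τ 0 1 := by
    rw [hm_apply]; norm_num
  have s10 : henckyMises2 τ 1 0 = (4 - 2 * Real.exp (-dev2 τ)) * τ 0 1 := by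
    rw [hm_apply, hbτ]; norm_num
  have s11 : henckyMises2 τ 1 1 = (1 + Real.exp (-dev2 τ)) * (τ 0 0 + τ 1 1)
      + (4 - 2 * Real.exp (-dev2 τ)) * τ 1 1 := by
    rw [hm_apply]; norm_num
  have t00 : henckyMises2 η 0 0 = (1 + Real.exp (-dev2 η)) * (η 0 0 + η 1 1)
      + (4 - 2 * Real.exp (-dev2 η)) * η 0 0 := by
    rw [hm_apply]; norm_num
  have t01 : henckyMises2 η 0 1 = (4 - 2 * Real.exp (-dev2 η)) * η 0 1 := by
    rw [hm_apply]; norm_num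
  have t10 : henckyMises2 η 1 0 = (4 - 2 * Real.exp (-dev2 η)) * η 0 1 := by
    rw [hm_apply, hbη]; norm_num
  have t11 : henckyMises2 η 1 1 = (1 + Real.exp (-dev2 η)) * (η 0 0 + η 1 1)
      + (4 - 2 * Real.exp (-dev2 η)) * η 1 1 := by
    rw [hm_apply]; norm_num
  refine ⟨?_, ?_, ?_⟩
  · -- growth
    have hT : frobInner (henckyMises2 τ) (henckyMises2 τ) ≤ 64 * frobInner τ τ := by
      rw [frob_expand, s00, s01, s10, s11, hS]
      have := growth_scalar (τ 0 0) (τ 0 1) (τ 1 1) (Real.exp (-dev2 τ)) he1p he1le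
      nlinarith [this]
    have h1 : frobNorm (henckyMises2 τ) ≤ Real.sqrt (64 * frobInner τ τ) :=
      Real.sqrt_le_sqrt hT
    rwa [show (64 : ℝ) * frobInner τ τ = 8 ^ 2 * frobInner τ τ by norm_num,
      Real.sqrt_mul (by positivity), Real.sqrt_sq (by norm_num)] at h1
  · -- coercivity
    have hsq : frobNorm τ ^ 2 = frobInner τ τ := Real.sq_sqrt hS0
    rw [one_pow, one_mul, hsq, hS, frob_expand, s00, s01, s10, s11, hbτ]
    have := coercive_scalar (τ 0 0) (τ 0 1) (τ 1 1) (Real.exp (-dev2 τ)) he1p he1le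
    nlinarith [this]
  · -- strict monotonicity
    intro hne
    have hne3 : τ 0 0 ≠ η 0 0 ∨ τ 0 1 ≠ η 0 1 ∨ τ 1 1 ≠ η 1 1 := by
      by_contra h
      push_neg at h
      obtain ⟨h1, h2, h3⟩ := h
      apply hne
      have h4 : τ 1 0 = η 1 0 := by rw [hbτ, hbη]; exact h2
      ext i j
      fin_cases i <;> fin_cases j
      · exact h1
      · exact h2
      · exact h4
      · exact h3
    have hpos : 0 < (τ 0 0 - η 0 0) ^ 2 + (τ 0 1 - η 0 1) ^ 2 + (τ 1 1 - η 1 1) ^ 2 := by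
      rcases hne3 with h | h | h
      · have h5 : (τ 0 0 - η 0 0) ^ 2 > 0 := by have := sub_ne_zero.mpr h; positivity
        nlinarith [sq_nonneg (τ 0 1 - η 0 1), sq_nonneg (τ 1 1 - η 1 1)]
      · have h5 : (τ 0 1 - η 0 1) ^ 2 > 0 := by have := sub_ne_zero.mpr h; positivity
        nlinarith [sq_nonneg (τ 0 0 - η 0 0), sq_nonneg (τ 1 1 - η 1 1)]
      · have h5 : (τ 1 1 - η 1 1) ^ 2 > 0 := by have := sub_ne_zero.mpr h; positivity
        nlinarith [sq_nonneg (τ 0 0 - η 0 0), sq_nonneg (τ 0 1 - η 0 1)]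
    have hmono : (dev2 τ - dev2 η) * (Real.exp (-dev2 τ) - Real.exp (-dev2 η)) ≤ 0 :=
      exp_mono_aux (dev2 τ) (dev2 η)
    rw [frob_expand]
    simp only [Matrix.sub_apply]
    rw [s00, s01, s10, s11, t00, t01, t10, t11, hbτ, hbη]
    have := mono_scalar (τ 0 0) (τ 0 1) (τ 1 1) (η 0 0) (η 0 1) (η 1 1)
      (Real.exp (-dev2 τ)) (Real.exp (-dev2 η)) (dev2 τ) (dev2 η)
      he1le he2le hdτ hdη hmono hpos
    nlinarith [this]
end
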